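/- Let ℋ_a and ℋ_b be finite-dimensional complex Hilbert spaces, ℋ = ℋ_a ⊗ ℋ_b, and let 𝔼 : B(ℋ) → B(ℋ) be the conditional expectation 𝔼(A) = (tr_b(A)/dim ℋ_b) ⊗ 1_b, where tr_b denotes the partial trace over ℋ_b. Then for every A ∈ B(ℋ): ‖A − 𝔼(A)‖ ≤ sup{ ‖[O, A]‖ : O = 1_a ⊗ O_b with O_b ∈ B(ℋ_b) and ‖O‖ = 1 }, where ‖·‖ is the operator norm and [O, A] = OA − AO. -/

import Mathlib

noncomputable section

open scoped Matrix

/-- Operator norm of a matrix, acting on the Euclidean (ℓ²) space. -/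
def opNorm {ι : Type} [Fintype ι] [DecidableEq ι] (A : Matrix ι ι ℂ) : ℝ :=
  ‖Matrix.toEuclideanCLM (𝕜 := ℂ) A‖

/-- Partial trace over the second factor of a bipartite system. -/
def ptraceB {ιa ιb : Type} [Fintype ιb] (A : Matrix (ιa × ιb) (ιa × ιb) ℂ) :
    Matrix ιa ιa ℂ := fun i j => ∑ k : ιb, A (i, k) (j, k)

/-- The conditional expectation `𝔼(A) = (tr_b(A)/dim ℋ_b) ⊗ 1_b`. -/
def condExpB {ιa ιb : Type} [Fintype ιb] [DecidableEq ιb]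
    (A : Matrix (ιa × ιb) (ιa × ιb) ℂ) : Matrix (ιa × ιb) (ιa × ιb) ℂ := fun p q =>
  if p.2 = q.2 then ptraceB A p.1 q.1 / (Fintype.card ιb : ℂ) else 0

/-- The operator `1_a ⊗ O_b` on a bipartite system. -/
def idTensor {ιa ιb : Type} [DecidableEq ιa] (Ob : Matrix ιb ιb ℂ) :
    Matrix (ιa × ιb) (ιa × ιb) ℂ := fun p q => if p.1 = q.1 then Ob p.2 q.2 else 0

section Aux

set_option linter.unusedSectionVars false

open scoped Matrix.Norms.L2Operator

namespace CondExpAux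

variable {ιa ιb : Type} [Fintype ιa] [DecidableEq ιa] [Fintype ιb] [DecidableEq ιb]

lemma opNorm_eq {ι : Type} [Fintype ι] [DecidableEq ι] (A : Matrix ι ι ℂ) :
    opNorm A = ‖A‖ := rfl

lemma idT_mul (X Y : Matrix ιb ιb ℂ) :
    (idTensor (ιa := ιa) (X * Y)) = idTensor X * idTensor Y := by
  ext ⟨i, k⟩ ⟨j, l⟩
  simp only [idTensor, Matrix.mul_apply, Fintype.sum_prod_type, ite_mul, mul_ite,
    zero_mul, mul_zero]
  by_cases h : i = j <;> simp [h, Finset.sum_ite_eq, eq_comm]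

lemma idT_conjTranspose (X : Matrix ιb ιb ℂ) :
    (idTensor (ιa := ιa) X)ᴴ = idTensor Xᴴ := by
  ext ⟨i, k⟩ ⟨j, l⟩
  simp only [idTensor, Matrix.conjTranspose_apply, apply_ite, map_zero]
  by_cases h : i = j <;> simp [h, eq_comm]

lemma idT_one : (idTensor (ιa := ιa) (1 : Matrix ιb ιb ℂ)) = 1 := by
  ext ⟨i, k⟩ ⟨j, l⟩
  simp [idTensor, Matrix.one_apply, Prod.ext_iff, ite_and]

def sgn (ε : ιb → Bool) (k : ιb) : ℂ := if ε k then 1 else -1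

lemma sgn_mul_self (ε : ιb → Bool) (k : ιb) : sgn ε k * sgn ε k = 1 := by
  unfold sgn; by_cases h : ε k <;> simp [h]

lemma star_sgn (ε : ιb → Bool) (k : ιb) : (starRingEnd ℂ) (sgn ε k) = sgn ε k := by
  unfold sgn; by_cases h : ε k <;> simp [h]

lemma sgn_sum_ne {k l : ιb} (h : k ≠ l) :
    ∑ ε : ιb → Bool, sgn ε k * sgn ε l = 0 := by
  apply Finset.sum_ninvolution (g := fun ε => Function.update ε k (!(ε k)))
  · intro ε
    have h1 : sgn (Function.update ε k (!(ε k))) k = - sgn ε k := by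
      unfold sgn; by_cases hε : ε k <;> simp [hε]
    have h2 : sgn (Function.update ε k (!(ε k))) l = sgn ε l := by
      unfold sgn; rw [Function.update_of_ne (Ne.symm h)]
    rw [h1, h2]; ring
  · intro ε _ hc
    have := congrFun hc k
    simp at this
  · intro ε; exact Finset.mem_univ _
  · intro ε
    funext x
    by_cases hx : x = k
    · subst hx; simp
    · simp [Function.update_of_ne hx]

lemma sgn_sum_self (k : ιb) :
    ∑ ε : ιb → Bool, sgn ε k * sgn ε k = (Fintype.card (ιb → Bool) : ℂ) := by
  simp [sgn_mul_self, Finset.card_univ]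

def Wmat (σ : Equiv.Perm ιb) (ε : ιb → Bool) : Matrix ιb ιb ℂ :=
  fun k m => sgn ε k * (if σ m = k then 1 else 0)

lemma Wmat_mul_conjTranspose (σ : Equiv.Perm ιb) (ε : ιb → Bool) :
    Wmat σ ε * (Wmat σ ε)ᴴ = 1 := by
  ext k l
  simp only [Matrix.mul_apply, Matrix.conjTranspose_apply, Wmat, map_mul, star_sgn,
    apply_ite, map_one, map_zero, Matrix.one_apply]
  rw [Finset.sum_eq_single (σ.symm k)]
  · by_cases h : k = l
    · simp [h, sgn_mul_self, star_sgn]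
    · have : ¬ σ (σ.symm k) = l := by simpa using fun hc => h hc
      simp [this, h]
  · intro b _ hb
    have : ¬ σ b = k := fun hc => hb (by simpa using congrArg σ.symm hc)
    simp [this]
  · simp

lemma conjTranspose_mul_Wmat (σ : Equiv.Perm ιb) (ε : ιb → Bool) :
    (Wmat σ ε)ᴴ * Wmat σ ε = 1 := by
  ext m n
  simp only [Matrix.mul_apply, Matrix.conjTranspose_apply, Wmat, map_mul, star_sgn,
    apply_ite, map_one, map_zero, Matrix.one_apply]
  rw [Finset.sum_eq_single (σ m)]
  · by_cases h : m = n
    · simp [h, sgn_mul_self, star_sgn]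
    · have : ¬ σ n = σ m := by simpa using fun hc => h hc.symm
      simp [this, h]
  · intro b _ hb
    have : ¬ σ m = b := fun hc => hb hc.symm
    simp [this]
  · simp

lemma mulW_apply (σ : Equiv.Perm ιb) (ε : ιb → Bool) (A : Matrix (ιa × ιb) (ιa × ιb) ℂ)
    (i : ιa) (k : ιb) (q : ιa × ιb) :
    (idTensor (ιa := ιa) (Wmat σ ε) * A) (i, k) q = sgn ε k * A (i, σ.symm k) q := by
  rw [Matrix.mul_apply]
  rw [Finset.sum_eq_single ((i, σ.symm k) : ιa × ιb)]
  · simp [idTensor, Wmat]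
  · rintro ⟨x, x1⟩ - hb
    by_cases h1 : i = x
    · subst h1
      have h2 : ¬ σ x1 = k := fun hc => hb (by rw [← hc]; simp)
      simp [idTensor, Wmat, h2]
    · simp [idTensor, Wmat, h1]
  · simp

lemma mulWH_apply (σ : Equiv.Perm ιb) (ε : ιb → Bool) (A : Matrix (ιa × ιb) (ιa × ιb) ℂ)
    (q : ιa × ιb) (j : ιa) (l : ιb) :
    (A * (idTensor (ιa := ιa) (Wmat σ ε))ᴴ) q (j, l) = A q (j, σ.symm l) * sgn ε l := by
  rw [Matrix.mul_apply]
  rw [Finset.sum_eq_single ((j, σ.symm l) : ιa × ιb)]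
  · simp [idTensor, Wmat, Matrix.conjTranspose_apply, star_sgn]
  · rintro ⟨x, x1⟩ - hb
    by_cases h1 : j = x
    · subst h1
      have h2 : ¬ σ x1 = l := fun hc => hb (by rw [← hc]; simp)
      simp [idTensor, Wmat, Matrix.conjTranspose_apply, h2]
    · simp [idTensor, Wmat, Matrix.conjTranspose_apply, h1]
  · simp

lemma triple_apply (σ : Equiv.Perm ιb) (ε : ιb → Bool) (A : Matrix (ιa × ιb) (ιa × ιb) ℂ)
    (i : ιa) (k : ιb) (j : ιa) (l : ιb) :
    (idTensor (ιa := ιa) (Wmat σ ε) * A * (idTensor (ιa := ιa) (Wmat σ ε))ᴴ) (i, k) (j, l) =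
      sgn ε k * sgn ε l * A (i, σ.symm k) (j, σ.symm l) := by
  rw [mulWH_apply, mulW_apply]; ring

end CondExpAux

end Aux


open CondExpAux in
/-- **Lemma (conditional expectations and commutators)**.  Let `ℋ = ℋ_a ⊗ ℋ_b` be a
bipartite finite-dimensional Hilbert space and `𝔼(A) = (tr_b(A)/dim ℋ_b) ⊗ 1_b` the
tracial conditional expectation.  Then
`‖A − 𝔼(A)‖ ≤ sup { ‖[O, A]‖ : O = 1_a ⊗ O_b, ‖O‖ = 1 }`. -/
theorem condExp_le_sup_commutator
    (ιa ιb : Type) [Fintype ιa] [DecidableEq ιa] [Fintype ιb] [DecidableEq ιb]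
    (A : Matrix (ιa × ιb) (ιa × ιb) ℂ) :
    opNorm (A - condExpB A) ≤
      sSup {t : ℝ | ∃ Ob : Matrix ιb ιb ℂ,
        opNorm (idTensor (ιa := ιa) Ob) = 1 ∧
        t = opNorm (idTensor (ιa := ιa) Ob * A - A * idTensor (ιa := ιa) Ob)} := by
  classical
  open scoped Matrix.Norms.L2Operator in
  by_cases hne : Nonempty ιa ∧ Nonempty ιb
  case neg =>
    -- degenerate case: the whole space is trivial
    haveI : IsEmpty (ιa × ιb) := by
      rcases not_and_or.mp hne with h | h
      · exact ⟨fun p => (not_nonempty_iff.mp h).false p.1⟩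
      · exact ⟨fun p => (not_nonempty_iff.mp h).false p.2⟩
    have hz : A - condExpB A = 0 := by
      ext p q; exact isEmptyElim p
    rw [hz]
    have h0 : opNorm (0 : Matrix (ιa × ιb) (ιa × ιb) ℂ) = 0 := by
      rw [opNorm, map_zero, norm_zero]
    rw [h0]
    apply Real.sSup_nonneg
    rintro t ⟨Ob, -, rfl⟩
    rw [opNorm_eq]; exact norm_nonneg _
  obtain ⟨ha, hb⟩ := hne
  haveI := ha; haveI := hb
  haveI : NeZero (Fintype.card ιb) := ⟨Fintype.card_ne_zero⟩
  set d := Fintype.card ιb with hd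
  set e := Fintype.equivFin ιb with he
  -- the cyclic shift permutations
  set σ : ιb → Equiv.Perm ιb :=
    fun t => e.trans ((Equiv.addRight (e t)).trans e.symm) with hσ
  set V : (ιb → Bool) × ιb → Matrix (ιa × ιb) (ιa × ιb) ℂ :=
    fun p => idTensor (Wmat (σ p.2) p.1) with hV
  set N := Fintype.card ((ιb → Bool) × ιb) with hN
  have hNpos : 0 < N := Fintype.card_pos
  have hNC : (N : ℂ) ≠ 0 := by exact_mod_cast hNpos.ne'
  -- unitarity
  have hVVH : ∀ p, V p * (V p)ᴴ = 1 := fun p => by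
    rw [hV, idT_conjTranspose, ← idT_mul, Wmat_mul_conjTranspose, idT_one]
  have hVHV : ∀ p, (V p)ᴴ * V p = 1 := fun p => by
    rw [hV, idT_conjTranspose, ← idT_mul, conjTranspose_mul_Wmat, idT_one]
  have hnorm1 : ‖(1 : Matrix (ιa × ιb) (ιa × ιb) ℂ)‖ = 1 := by
    rw [Matrix.cstar_norm_def, map_one]
    exact ContinuousLinearMap.norm_id
  have hVnorm : ∀ p, ‖V p‖ = 1 := by
    intro p
    have h2 : ‖V p‖ * ‖V p‖ = 1 := by
      rw [← Matrix.l2_opNorm_conjTranspose_mul_self, hVHV p, hnorm1]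
    nlinarith [norm_nonneg (V p)]
  -- the key averaging identity
  have key : ∑ p : (ιb → Bool) × ιb, V p * A * (V p)ᴴ = (N : ℂ) • condExpB A := by
    ext ⟨i, k⟩ ⟨j, l⟩
    rw [Matrix.sum_apply, Matrix.smul_apply]
    have hterm : ∀ p : (ιb → Bool) × ιb,
        (V p * A * (V p)ᴴ) (i, k) (j, l) =
          sgn p.1 k * sgn p.1 l * A (i, (σ p.2).symm k) (j, (σ p.2).symm l) :=
      fun p => triple_apply _ _ _ _ _ _ _
    rw [Finset.sum_congr rfl fun p _ => hterm p]
    rw [Fintype.sum_prod_type]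
    have hfact : ∀ ε : ιb → Bool, ∑ t : ιb,
        sgn ε k * sgn ε l * A (i, (σ t).symm k) (j, (σ t).symm l) =
        sgn ε k * sgn ε l * ∑ t : ιb, A (i, (σ t).symm k) (j, (σ t).symm l) := by
      intro ε; rw [Finset.mul_sum]
    rw [Finset.sum_congr rfl fun ε _ => hfact ε, ← Finset.sum_mul]
    by_cases hkl : k = l
    · subst hkl
      rw [sgn_sum_self]
      have hbij : ∑ t : ιb, A (i, (σ t).symm k) (j, (σ t).symm k) = ptraceB A i j := by
        have heq : ∀ t : ιb, (σ t).symm k = (e.trans ((Equiv.subLeft (e k)).trans e.symm)) t := by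
          intro t
          simp [hσ, Equiv.subLeft, sub_eq_add_neg]
        rw [Finset.sum_congr rfl fun t _ => by rw [heq t]]
        rw [Equiv.sum_comp (e.trans ((Equiv.subLeft (e k)).trans e.symm))
          (fun m => A (i, m) (j, m))]
        rfl
      rw [hbij]
      have hcard : (N : ℂ) = (Fintype.card (ιb → Bool) : ℂ) * (d : ℂ) := by
        rw [hN, Fintype.card_prod]; push_cast; ring
      have hdC : (d : ℂ) ≠ 0 := by
        exact_mod_cast Fintype.card_ne_zero
      rw [condExpB]
      simp only [if_pos rfl]
      rw [hcard]
      field_simp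
      simp only [if_true, smul_eq_mul, ← hd, div_eq_mul_inv]
      linear_combination (-((Fintype.card (ιb → Bool) : ℂ) * ptraceB A i j)) * mul_inv_cancel₀ hdC
    · rw [sgn_sum_ne hkl, zero_mul, condExpB]
      simp [hkl]
  -- rewrite the difference as an average of commutator products
  have havg0 : (N : ℂ) • (A - condExpB A) =
      ∑ p : (ιb → Bool) × ιb, (A - V p * A * (V p)ᴴ) := by
    rw [Finset.sum_sub_distrib, key, Finset.sum_const, Finset.card_univ, ← hN, smul_sub]
    congr 1
    exact Nat.cast_smul_eq_nsmul ℂ N A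
  have havg : A - condExpB A =
      (N : ℂ)⁻¹ • ∑ p : (ιb → Bool) × ιb, (A - V p * A * (V p)ᴴ) := by
    rw [← havg0, smul_smul, inv_mul_cancel₀ hNC, one_smul]
  set S : Set ℝ := {t : ℝ | ∃ Ob : Matrix ιb ιb ℂ,
        opNorm (idTensor (ιa := ιa) Ob) = 1 ∧
        t = opNorm (idTensor (ιa := ιa) Ob * A - A * idTensor (ιa := ιa) Ob)} with hS
  have hbdd : BddAbove S := by
    refine ⟨2 * ‖A‖, ?_⟩
    rintro t ⟨Ob, h1, rfl⟩
    rw [opNorm_eq] at h1 ⊢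
    calc ‖idTensor (ιa := ιa) Ob * A - A * idTensor (ιa := ιa) Ob‖
        ≤ ‖idTensor (ιa := ιa) Ob * A‖ + ‖A * idTensor (ιa := ιa) Ob‖ := norm_sub_le _ _
      _ ≤ ‖idTensor (ιa := ιa) Ob‖ * ‖A‖ + ‖A‖ * ‖idTensor (ιa := ιa) Ob‖ :=
          add_le_add (norm_mul_le _ _) (norm_mul_le _ _)
      _ = 2 * ‖A‖ := by rw [h1]; ring
  have hmem : ∀ p : (ιb → Bool) × ιb, ‖V p * A - A * V p‖ ∈ S := by
    intro p
    exact ⟨Wmat (σ p.2) p.1, by rw [opNorm_eq]; exact hVnorm p, by rw [opNorm_eq]⟩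
  have hterm_le : ∀ p : (ιb → Bool) × ιb, ‖A - V p * A * (V p)ᴴ‖ ≤ sSup S := by
    intro p
    have heq : A - V p * A * (V p)ᴴ = (A * V p - V p * A) * (V p)ᴴ := by
      rw [sub_mul, mul_assoc A, hVVH p, mul_one]
    rw [heq]
    calc ‖(A * V p - V p * A) * (V p)ᴴ‖
        ≤ ‖A * V p - V p * A‖ * ‖(V p)ᴴ‖ := norm_mul_le _ _
      _ = ‖V p * A - A * V p‖ := by
          rw [Matrix.l2_opNorm_conjTranspose, hVnorm p, mul_one, ← norm_neg, neg_sub]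
      _ ≤ sSup S := le_csSup hbdd (hmem p)
  rw [opNorm_eq, havg]
  calc ‖(N : ℂ)⁻¹ • ∑ p : (ιb → Bool) × ιb, (A - V p * A * (V p)ᴴ)‖
      = (N : ℝ)⁻¹ * ‖∑ p : (ιb → Bool) × ιb, (A - V p * A * (V p)ᴴ)‖ := by
        rw [norm_smul, norm_inv]
        norm_num
    _ ≤ (N : ℝ)⁻¹ * ∑ p : (ιb → Bool) × ιb, ‖A - V p * A * (V p)ᴴ‖ := by
        apply mul_le_mul_of_nonneg_left (norm_sum_le _ _)
        positivity
    _ ≤ (N : ℝ)⁻¹ * ∑ _p : (ιb → Bool) × ιb, sSup S := by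
        apply mul_le_mul_of_nonneg_left (Finset.sum_le_sum fun p _ => hterm_le p)
        positivity
    _ = sSup S := by
        rw [Finset.sum_const, Finset.card_univ, ← hN, nsmul_eq_mul]
        field_simp
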